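/- Sample version of the threshold theorem: let A^(1),…,A^(N) be i.i.d. samples from the inhomogeneous Erdős–Rényi measure with edge-probability matrix P having no entry equal to 1/2. Then for every δ ∈ (0,1) there exists N_δ such that for all N ≥ N_δ, with probability at least 1 − δ, every minimizer B of B ↦ Σ_{k=1}^N d_H(A^(k),B) satisfies b_ij = 1 iff p_ij > 1/2 for all i<j. -/

import Mathlib

open Finset
open scoped Classical

/-- The set of pairs (i,j) with i < j. -/
def pairs (n : ℕ) : Finset (Fin n × Fin n) :=
  Finset.univ.filter (fun q => q.1 < q.2)

/-- The set `S` of adjacency matrices: symmetric Bool matrices with zero (false) diagonal. -/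
noncomputable def adjS (n : ℕ) : Finset (Matrix (Fin n) (Fin n) Bool) :=
  Finset.univ.filter (fun A => (∀ i j, A i j = A j i) ∧ ∀ i, A i i = false)

/-- The real-valued 0/1 entry of an adjacency matrix. -/
noncomputable def val {n : ℕ} (A : Matrix (Fin n) (Fin n) Bool) (i j : Fin n) : ℝ :=
  if A i j then 1 else 0

/-- The Hamming distance between two graphs. -/
noncomputable def dH {n : ℕ} (A B : Matrix (Fin n) (Fin n) Bool) : ℝ :=
  ∑ q ∈ pairs n, |val A q.1 q.2 - val B q.1 q.2|

/-- The inhomogeneous Erdős–Rényi probability of an adjacency matrix: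
`∏_{i<j} p_ij^{a_ij} (1-p_ij)^{1-a_ij}`. -/
noncomputable def erPr {n : ℕ} (p : Fin n → Fin n → ℝ) (A : Matrix (Fin n) (Fin n) Bool) : ℝ :=
  ∏ q ∈ pairs n, if A q.1 q.2 then p q.1 q.2 else 1 - p q.1 q.2

/-- The edge set of a graph: pairs (i,j), i<j, with b_ij = 1. -/
def edges {n : ℕ} (B : Matrix (Fin n) (Fin n) Bool) : Finset (Fin n × Fin n) :=
  (pairs n).filter (fun q => B q.1 q.2 = true)

/-!
The total Hamming distance `∑ₖ d_H(A⁽ᵏ⁾, B)` splits into a sum over pairs `q`, and the `q`-term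
depends only on `b_q` and on the number `m_q` of samples containing the edge `q`. So a minimizer
takes the majority value wherever the majority is strict, and the claim holds as soon as, at every
pair, `2 m_q - N` has the sign of `2 p_q - 1`. Reading a sample by its columns `q ↦ {k | a⁽ᵏ⁾_q = 1}`,
the counts `m_q` are independent binomials `Bin(N, p_q)`, and Chebyshev's inequality with variance
`N p_q (1 - p_q) ≤ N / 4` bounds the failure probability at `q` by `c_q / N`, where
`c_q = 1 / (4 (p_q - 1/2)²)`. Hence the good event has probability at least
`∏_q (1 - c_q / N) ≥ 1 - (∑_q c_q) / N`.
-/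

lemma sum_le_sum_mul_sq_div_sq {ι : Type*} [Fintype ι] {w X : ι → ℝ} {c : ℝ}
    (hw : ∀ x, 0 ≤ w x) (hc : 0 < c) {E : Finset ι} (hE : ∀ x ∈ E, c ≤ |X x|) :
    ∑ x ∈ E, w x ≤ (∑ x, w x * X x ^ 2) / c ^ 2 := by
  rw [Finset.sum_div]
  calc ∑ x ∈ E, w x ≤ ∑ x ∈ E, w x * X x ^ 2 / c ^ 2 := by
        refine Finset.sum_le_sum fun x hx => ?_
        have hsq : c ^ 2 ≤ X x ^ 2 := by
          simpa only [sq_abs] using pow_le_pow_left₀ hc.le (hE x hx) 2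
        rw [le_div_iff₀ (by positivity)]
        exact mul_le_mul_of_nonneg_left hsq (hw x)
    _ ≤ ∑ x, w x * X x ^ 2 / c ^ 2 :=
        Finset.sum_le_sum_of_subset_of_nonneg (Finset.subset_univ E)
          fun x _ _ => by have := hw x; positivity

lemma one_sub_sum_one_sub_le_prod {ι : Type*} (s : Finset ι) {f : ι → ℝ}
    (h0 : ∀ i ∈ s, 0 ≤ f i) (h1 : ∀ i ∈ s, f i ≤ 1) :
    1 - ∑ i ∈ s, (1 - f i) ≤ ∏ i ∈ s, f i := by
  classical
  induction s using Finset.induction_on with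
  | empty => simp
  | insert a s ha ih =>
    rw [Finset.sum_insert ha, Finset.prod_insert ha]
    have hs := ih (fun i hi => h0 i (Finset.mem_insert_of_mem hi))
      (fun i hi => h1 i (Finset.mem_insert_of_mem hi))
    have hS : 0 ≤ ∑ i ∈ s, (1 - f i) :=
      Finset.sum_nonneg fun i hi => sub_nonneg.2 (h1 i (Finset.mem_insert_of_mem hi))
    have ha0 := h0 a (Finset.mem_insert_self a s)
    have ha1 := h1 a (Finset.mem_insert_self a s)
    nlinarith [mul_le_mul_of_nonneg_left hs ha0]

section Bernoulli

variable {α : Type*} [Fintype α]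

noncomputable def bernoulliWeight (θ : ℝ) (s : Finset α) : ℝ :=
  θ ^ #s * (1 - θ) ^ (Fintype.card α - #s)

lemma bernoulliWeight_nonneg {θ : ℝ} (h0 : 0 ≤ θ) (h1 : θ ≤ 1) (s : Finset α) :
    0 ≤ bernoulliWeight θ s :=
  mul_nonneg (pow_nonneg h0 _) (pow_nonneg (sub_nonneg.2 h1) _)

lemma sum_bernoulliWeight (θ : ℝ) : ∑ s : Finset α, bernoulliWeight θ s = 1 := by
  simp [bernoulliWeight, Fintype.sum_pow_mul_eq_add_pow]

lemma sum_bernoulliWeight_mul_sq (θ : ℝ) :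
    ∑ s : Finset α, bernoulliWeight θ s * (#s - Fintype.card α * θ) ^ 2
      = Fintype.card α * θ * (1 - θ) := by
  have h := congrArg (Polynomial.eval θ) (bernsteinPolynomial.variance ℝ (Fintype.card α))
  simp only [Polynomial.eval_finsetSum, bernsteinPolynomial, Polynomial.eval_mul,
    Polynomial.eval_pow, Polynomial.eval_sub, Polynomial.eval_X, Polynomial.eval_natCast,
    Polynomial.eval_one, nsmul_eq_mul] at h
  unfold bernoulliWeight
  rw [← Finset.powerset_univ, Finset.sum_powerset_apply_card
    (fun m => θ ^ m * (1 - θ) ^ (Fintype.card α - m) * (m - Fintype.card α * θ) ^ 2),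
    Finset.card_univ, ← h]
  refine Finset.sum_congr rfl fun m _ => ?_
  ring

lemma le_abs_card_sub_of_mul_nonpos {N m : ℕ} {θ : ℝ} (hN : 0 < N)
    (h : (2 * (m : ℝ) - N) * (2 * θ - 1) ≤ 0) : N * |θ - 1 / 2| ≤ |m - N * θ| := by
  have hN' : (0 : ℝ) < N := Nat.cast_pos.2 hN
  have hab : (m - N / 2 : ℝ) * (N * (θ - 1 / 2)) ≤ 0 := by nlinarith
  have key : |(N : ℝ) * (θ - 1 / 2)| ≤ |m - N * θ| := by
    rw [← sq_le_sq]
    nlinarith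
  rwa [abs_mul, abs_of_pos hN'] at key

lemma one_sub_le_sum_bernoulliWeight_majority {θ : ℝ} (h0 : 0 ≤ θ) (h1 : θ ≤ 1)
    (hθ : θ ≠ 1 / 2) (hα : 0 < Fintype.card α) :
    1 - 1 / (4 * (θ - 1 / 2) ^ 2) / Fintype.card α ≤
      ∑ s : Finset α with 0 < (2 * (#s : ℝ) - Fintype.card α) * (2 * θ - 1),
        bernoulliWeight θ s := by
  set N := Fintype.card α
  have hN : (0 : ℝ) < N := Nat.cast_pos.2 hα
  have hd : 0 < |θ - 1 / 2| := abs_pos.2 (sub_ne_zero.2 hθ)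
  have hbad := sum_le_sum_mul_sq_div_sq (bernoulliWeight_nonneg (α := α) h0 h1)
    (X := fun s => (#s - N * θ : ℝ)) (mul_pos hN hd)
    (E := {s | ¬ 0 < (2 * (#s : ℝ) - N) * (2 * θ - 1)})
    fun s hs => le_abs_card_sub_of_mul_nonpos hα (not_lt.1 (Finset.mem_filter.1 hs).2)
  have htot := Finset.sum_filter_add_sum_filter_not (Finset.univ : Finset (Finset α))
    (fun s : Finset α => 0 < (2 * (#s : ℝ) - N) * (2 * θ - 1)) (bernoulliWeight θ)
  rw [sum_bernoulliWeight_mul_sq, mul_pow, sq_abs] at hbad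
  rw [sum_bernoulliWeight] at htot
  have hvar : N * θ * (1 - θ) / (N ^ 2 * (θ - 1 / 2) ^ 2) ≤ 1 / (4 * (θ - 1 / 2) ^ 2) / N := by
    have : 0 < (θ - 1 / 2) ^ 2 := by positivity
    rw [div_div, div_le_div_iff₀ (by positivity) (by positivity)]
    nlinarith [sq_nonneg (θ - 1 / 2), mul_pos (mul_pos hN hN) this]
  linarith

end Bernoulli

lemma mem_pairs {n : ℕ} {q : Fin n × Fin n} : q ∈ pairs n ↔ q.1 < q.2 := by simp [pairs]

lemma mem_adjS {n : ℕ} {A : Matrix (Fin n) (Fin n) Bool} :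
    A ∈ adjS n ↔ (∀ i j, A i j = A j i) ∧ ∀ i, A i i = false := by simp [adjS]

lemma erPr_nonneg {n : ℕ} {p : Fin n → Fin n → ℝ} (hp : ∀ i j, 0 ≤ p i j ∧ p i j ≤ 1)
    (A : Matrix (Fin n) (Fin n) Bool) : 0 ≤ erPr p A :=
  Finset.prod_nonneg fun q _ => by
    cases A q.1 q.2 <;> simp [(hp q.1 q.2).1, (hp q.1 q.2).2]

lemma exists_mem_adjS_update {n : ℕ} {B : Matrix (Fin n) (Fin n) Bool} (hB : B ∈ adjS n)
    {q : Fin n × Fin n} (hq : q ∈ pairs n) (b : Bool) :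
    ∃ C ∈ adjS n, C q.1 q.2 = b ∧ ∀ q' ∈ pairs n, q' ≠ q → C q'.1 q'.2 = B q'.1 q'.2 := by
  have hlt := mem_pairs.1 hq
  refine ⟨fun i j => if s(i, j) = s(q.1, q.2) then b else B i j, ?_, by simp, ?_⟩
  · refine mem_adjS.2 ⟨fun i j => ?_, fun i => ?_⟩
    · simp only [Sym2.eq_swap (a := i), (mem_adjS.1 hB).1 i j]
    · have : s(i, i) ≠ s(q.1, q.2) := by
        rw [Ne, Sym2.eq_iff]
        rintro (⟨h1, h2⟩ | ⟨h1, h2⟩)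
        · exact hlt.ne (h1.symm.trans h2)
        · exact hlt.ne (h2.symm.trans h1)
      simp [this, (mem_adjS.1 hB).2 i]
  · intro q' hq' hne
    have : s(q'.1, q'.2) ≠ s(q.1, q.2) := by
      rw [Ne, Sym2.eq_iff]
      rintro (⟨h1, h2⟩ | ⟨h1, h2⟩)
      · exact hne (Prod.ext h1 h2)
      · exact (mem_pairs.1 hq').asymm (h1 ▸ h2 ▸ hlt)
    simp [this]

section Samples

variable {n N : ℕ}

def column (ω : Fin N → Matrix (Fin n) (Fin n) Bool) (i j : Fin n) : Finset (Fin N) :=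
  univ.filter fun k => ω k i j

lemma sum_dH_eq (ω : Fin N → Matrix (Fin n) (Fin n) Bool) (B : Matrix (Fin n) (Fin n) Bool) :
    ∑ k, dH (ω k) B = ∑ q ∈ pairs n,
      if B q.1 q.2 then (N - #(column ω q.1 q.2) : ℝ) else #(column ω q.1 q.2) := by
  simp only [dH]
  rw [Finset.sum_comm]
  refine Finset.sum_congr rfl fun q _ => ?_
  have hcount : ∑ k, _root_.val (ω k) q.1 q.2 = #(column ω q.1 q.2) := by
    simp [_root_.val, column]
  have hk : ∀ k, |_root_.val (ω k) q.1 q.2 - _root_.val B q.1 q.2| =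
      if B q.1 q.2 then 1 - _root_.val (ω k) q.1 q.2 else _root_.val (ω k) q.1 q.2 := fun k => by
    unfold _root_.val
    cases B q.1 q.2 <;> cases ω k q.1 q.2 <;> norm_num
  rw [Finset.sum_congr rfl fun k _ => hk k, ← hcount]
  split_ifs <;> simp [Finset.sum_sub_distrib]

lemma minimizer_apply_eq_true_iff {ω : Fin N → Matrix (Fin n) (Fin n) Bool}
    {B : Matrix (Fin n) (Fin n) Bool} (hB : B ∈ adjS n)
    (hmin : ∀ C ∈ adjS n, ∑ k, dH (ω k) B ≤ ∑ k, dH (ω k) C)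
    {q : Fin n × Fin n} (hq : q ∈ pairs n) {θ : ℝ}
    (hmaj : 0 < (2 * (#(column ω q.1 q.2) : ℝ) - N) * (2 * θ - 1)) :
    (B q.1 q.2 = true ↔ 1 / 2 < θ) := by
  obtain ⟨C, hC, hCq, hCB⟩ := exists_mem_adjS_update hB hq (!B q.1 q.2)
  set cost : Matrix (Fin n) (Fin n) Bool → Fin n × Fin n → ℝ := fun A q =>
    if A q.1 q.2 then (N - #(column ω q.1 q.2) : ℝ) else #(column ω q.1 q.2)
  have hdiff : ∑ q' ∈ pairs n, (cost C q' - cost B q') = cost C q - cost B q :=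
    Finset.sum_eq_single_of_mem q hq fun q' hq' hne => by simp [cost, hCB q' hq' hne]
  have hle : cost B q ≤ cost C q := by
    have := hmin C hC
    rw [sum_dH_eq, sum_dH_eq] at this
    rw [Finset.sum_sub_distrib] at hdiff
    linarith
  simp only [cost, hCq] at hle
  cases hb : B q.1 q.2 <;>
    simp only [hb, Bool.false_eq_true, ↓reduceIte, Bool.not_false, Bool.not_true, false_iff,
      true_iff, not_lt] at hle ⊢ <;>
    nlinarith

def ofColumns (y : pairs n → Finset (Fin N)) (k : Fin N) : Matrix (Fin n) (Fin n) Bool :=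
  fun i j => if h : i < j then k ∈ y ⟨(i, j), mem_pairs.2 h⟩
    else if h' : j < i then k ∈ y ⟨(j, i), mem_pairs.2 h'⟩ else false

lemma ofColumns_mem_adjS (y : pairs n → Finset (Fin N)) (k : Fin N) :
    ofColumns y k ∈ adjS n := by
  refine mem_adjS.2 ⟨fun i j => ?_, fun i => by simp [ofColumns]⟩
  rcases lt_trichotomy i j with h | rfl | h
  · simp [ofColumns, h, h.not_gt]
  · rfl
  · simp [ofColumns, h, h.not_gt]

lemma column_ofColumns (y : pairs n → Finset (Fin N)) (t : pairs n) :
    column (ofColumns y) t.1.1 t.1.2 = y t := by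
  ext k
  simp [column, ofColumns, mem_pairs.1 t.2]

lemma ofColumns_column {ω : Fin N → Matrix (Fin n) (Fin n) Bool} (hω : ∀ k, ω k ∈ adjS n) :
    ofColumns (fun t => column ω t.1.1 t.1.2) = ω := by
  funext k i j
  obtain ⟨hsymm, hdiag⟩ := mem_adjS.1 (hω k)
  rcases lt_trichotomy i j with h | rfl | h
  · simp [ofColumns, column, h]
  · simp [ofColumns, hdiag]
  · simp [ofColumns, column, h, h.not_gt, hsymm i j]

lemma prod_erPr_eq (p : Fin n → Fin n → ℝ) (ω : Fin N → Matrix (Fin n) (Fin n) Bool) :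
    ∏ k, erPr p (ω k) = ∏ t : pairs n, bernoulliWeight (p t.1.1 t.1.2) (column ω t.1.1 t.1.2) := by
  simp only [erPr]
  rw [Finset.prod_comm, ← Finset.prod_coe_sort (pairs n)]
  refine Finset.prod_congr rfl fun t _ => ?_
  have hcard := Finset.card_filter_add_card_filter_not (s := univ)
    (fun k : Fin N => ω k t.1.1 t.1.2 = true)
  rw [Finset.card_univ, Fintype.card_fin] at hcard
  rw [Finset.prod_ite, Finset.prod_const, Finset.prod_const, bernoulliWeight, Fintype.card_fin,
    column]
  congr 2
  omega

lemma sum_prod_erPr_filter_column (p : Fin n → Fin n → ℝ) (P : pairs n → Finset (Fin N) → Prop) :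
    ∑ ω : Fin N → Matrix (Fin n) (Fin n) Bool with
        (∀ k, ω k ∈ adjS n) ∧ ∀ t, P t (column ω t.1.1 t.1.2), ∏ k, erPr p (ω k)
      = ∏ t : pairs n, ∑ s with P t s, bernoulliWeight (p t.1.1 t.1.2) s := by
  rw [Finset.prod_univ_sum]
  refine Finset.sum_nbij' (fun ω t => column ω t.1.1 t.1.2) ofColumns ?_ ?_ ?_ ?_ ?_
  · intro ω hω
    simpa using (Finset.mem_filter.1 hω).2.2
  · intro y hy
    simp only [Fintype.mem_piFinset, Finset.mem_filter, Finset.mem_univ, true_and] at hy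
    exact Finset.mem_filter.2 ⟨Finset.mem_univ _, ofColumns_mem_adjS y,
      fun t => (column_ofColumns y t).symm ▸ hy t⟩
  · intro ω hω
    exact ofColumns_column (Finset.mem_filter.1 hω).2.1
  · intro y _
    funext t
    exact column_ofColumns y t
  · intro ω _
    exact prod_erPr_eq p ω

end Samples

lemma one_sub_le_sum_prod_erPr_majority {n N : ℕ} {p : Fin n → Fin n → ℝ}
    (hp : ∀ i j, 0 ≤ p i j ∧ p i j ≤ 1) (hhalf : ∀ q ∈ pairs n, p q.1 q.2 ≠ 1 / 2) (hN : 0 < N) :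
    1 - (∑ t : pairs n, 1 / (4 * (p t.1.1 t.1.2 - 1 / 2) ^ 2)) / N ≤
      ∑ ω : Fin N → Matrix (Fin n) (Fin n) Bool with (∀ k, ω k ∈ adjS n) ∧
          ∀ t : pairs n, 0 < (2 * (#(column ω t.1.1 t.1.2) : ℝ) - N) * (2 * p t.1.1 t.1.2 - 1),
        ∏ k, erPr p (ω k) := by
  rw [sum_prod_erPr_filter_column p fun t s => 0 < (2 * (#s : ℝ) - N) * (2 * p t.1.1 t.1.2 - 1)]
  have hmaj (t : pairs n) := one_sub_le_sum_bernoulliWeight_majority (α := Fin N)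
    (hp t.1.1 t.1.2).1 (hp t.1.1 t.1.2).2 (hhalf t.1 t.2) (by simpa using hN)
  simp only [Fintype.card_fin] at hmaj
  refine le_trans ?_ (one_sub_sum_one_sub_le_prod univ
    (fun t _ => Finset.sum_nonneg fun s _ => bernoulliWeight_nonneg (hp _ _).1 (hp _ _).2 s)
    (fun t _ => (Finset.sum_le_sum_of_subset_of_nonneg (Finset.filter_subset _ _)
      fun s _ _ => bernoulliWeight_nonneg (hp _ _).1 (hp _ _).2 s).trans
        (sum_bernoulliWeight _).le))
  rw [Finset.sum_div]
  gcongr with t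
  linarith [hmaj t]

theorem stmt18_general (n : ℕ) (p : Fin n → Fin n → ℝ)
    (hp : ∀ i j, 0 ≤ p i j ∧ p i j ≤ 1)
    (hhalf : ∀ q ∈ pairs n, p q.1 q.2 ≠ 1 / 2) :
    ∀ δ ∈ Set.Ioo (0 : ℝ) 1, ∃ N₀ : ℕ, ∀ N ≥ N₀,
      1 - δ ≤
        ∑ ω ∈ (Finset.univ : Finset (Fin N → Matrix (Fin n) (Fin n) Bool)).filter
            (fun ω => (∀ k, ω k ∈ adjS n) ∧
              ∀ B ∈ adjS n,
                (∀ C ∈ adjS n, ∑ k, dH (ω k) B ≤ ∑ k, dH (ω k) C) →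
                  ∀ q ∈ pairs n, (B q.1 q.2 = true ↔ 1 / 2 < p q.1 q.2)),
          ∏ k, erPr p (ω k) := by
  rintro δ ⟨hδ, -⟩
  set c := ∑ t : pairs n, 1 / (4 * (p t.1.1 t.1.2 - 1 / 2) ^ 2)
  refine ⟨max 1 ⌈c / δ⌉₊, fun N hN => ?_⟩
  have hN1 : 0 < N := (le_max_left _ _).trans hN
  have hcN : c / N ≤ δ := by
    have : c / δ ≤ N := (Nat.le_ceil _).trans (by exact_mod_cast (le_max_right _ _).trans hN)
    rw [div_le_iff₀ hδ] at this
    rw [div_le_iff₀ (by exact_mod_cast hN1)]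
    linarith
  refine (sub_le_sub_left hcN 1).trans ((one_sub_le_sum_prod_erPr_majority hp hhalf hN1).trans ?_)
  refine Finset.sum_le_sum_of_subset_of_nonneg (fun ω hω => ?_)
    fun ω _ _ => Finset.prod_nonneg fun k _ => erPr_nonneg hp (ω k)
  obtain ⟨-, hadj, hmaj⟩ := Finset.mem_filter.1 hω
  exact Finset.mem_filter.2 ⟨Finset.mem_univ _, hadj, fun B hB hmin q hq =>
    minimizer_apply_eq_true_iff hB hmin hq (hmaj ⟨q, hq⟩)⟩

theorem stmt18 (n : ℕ) (p : Fin n → Fin n → ℝ)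
    (hp : ∀ i j, 0 ≤ p i j ∧ p i j ≤ 1) (hsym : ∀ i j, p i j = p j i)
    (hdiag : ∀ i, p i i = 0)
    (hhalf : ∀ q ∈ pairs n, p q.1 q.2 ≠ 1 / 2) :
    ∀ δ ∈ Set.Ioo (0 : ℝ) 1, ∃ N₀ : ℕ, ∀ N ≥ N₀,
      1 - δ ≤
        ∑ ω ∈ (Finset.univ : Finset (Fin N → Matrix (Fin n) (Fin n) Bool)).filter
            (fun ω => (∀ k, ω k ∈ adjS n) ∧
              ∀ B ∈ adjS n,
                (∀ C ∈ adjS n, ∑ k, dH (ω k) B ≤ ∑ k, dH (ω k) C) →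
                  ∀ q ∈ pairs n, (B q.1 q.2 = true ↔ 1 / 2 < p q.1 q.2)),
          ∏ k, erPr p (ω k) :=
  stmt18_general n p hp hhalf
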